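/- arXiv:2104.07159 — 2 statements merged into one kernel-verified Lean document; each statement's English description precedes it below -/
import Mathlib

section
/- For every closed-subcontext S of a finite formal context K, the concept lattice B(S) is a sublattice of B(K): it is a subset of the concepts of K closed under the binary join and meet operations of B(K). -/
variable {G M : Type*} [Fintype G] [Fintype M]

/-- Attribute derivation A' of an object set A w.r.t. incidence I. -/
def extDerivFCA (I : Set (G × M)) (A : Set G) : Set M := {m | ∀ g ∈ A, (g, m) ∈ I}

/-- Object derivation B' of an attribute set B w.r.t. incidence I. -/
def intDeriv (I : Set (G × M)) (B : Set M) : Set G := {g | ∀ m ∈ B, (g, m) ∈ I}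

/-- (A,B) is a formal concept of (G,M,I). -/
def IsConcept (I : Set (G × M)) (A : Set G) (B : Set M) : Prop :=
  extDerivFCA I A = B ∧ intDeriv I B = A

/-- Derivation of an object set inside the (sub)context (H,N,J). -/
def subExtDeriv (N : Set M) (J : Set (G × M)) (A : Set G) : Set M :=
  {n ∈ N | ∀ g ∈ A, (g, n) ∈ J}

/-- Derivation of an attribute set inside the (sub)context (H,N,J). -/
def subIntDeriv (H : Set G) (J : Set (G × M)) (B : Set M) : Set G :=
  {h ∈ H | ∀ n ∈ B, (h, n) ∈ J}

/-- (A,B) is a formal concept of the context (H,N,J). -/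
def IsSubConcept (H : Set G) (N : Set M) (J : Set (G × M)) (A : Set G) (B : Set M) : Prop :=
  A ⊆ H ∧ B ⊆ N ∧ subExtDeriv N J A = B ∧ subIntDeriv H J B = A

/-- (H,N,J) is a closed-subcontext of (G,M,I). -/
def IsClosedSubcontext (I : Set (G × M)) (H : Set G) (N : Set M) (J : Set (G × M)) : Prop :=
  J ⊆ I ∩ H ×ˢ N ∧ ∀ A B, IsSubConcept H N J A B → IsConcept I A B

/-- Binary join in the concept lattice of (G,M,I). -/
def conceptJoin (I : Set (G × M)) (c d : Set G × Set M) : Set G × Set M :=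
  (intDeriv I (c.2 ∩ d.2), c.2 ∩ d.2)

/-- Binary meet in the concept lattice of (G,M,I). -/
def conceptMeet (I : Set (G × M)) (c d : Set G × Set M) : Set G × Set M :=
  (c.1 ∩ d.1, extDerivFCA I (c.1 ∩ d.1))

/-- S is a sublattice of the concept lattice of (G,M,I). -/
def IsConceptSublattice (I : Set (G × M)) (S : Set (Set G × Set M)) : Prop :=
  S.Nonempty ∧ (∀ c ∈ S, IsConcept I c.1 c.2) ∧
    ∀ c ∈ S, ∀ d ∈ S, conceptJoin I c d ∈ S ∧ conceptMeet I c d ∈ S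

/-- Image of the concept set of the subcontext [H,N] under φ₁(A,B)=(A'',A'). -/
def phi1Image (I : Set (G × M)) (H : Set G) (N : Set M) : Set (Set G × Set M) :=
  {c | ∃ A B, IsSubConcept H N (I ∩ H ×ˢ N) A B ∧
      c = (intDeriv I (extDerivFCA I A), extDerivFCA I A)}

/-- Image of the concept set of the subcontext [H,N] under φ₂(A,B)=(B',B''). -/
def phi2Image (I : Set (G × M)) (H : Set G) (N : Set M) : Set (Set G × Set M) :=
  {c | ∃ A B, IsSubConcept H N (I ∩ H ×ˢ N) A B ∧
      c = (intDeriv I B, extDerivFCA I (intDeriv I B))}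

/-- [H,N] is (isomorphic to) a contranominal scale of dimension k in (G,M,I). -/
def IsContranominal (I : Set (G × M)) (k : ℕ) (H : Set G) (N : Set M) : Prop :=
  ∃ f : Fin k → G, ∃ g : Fin k → M, Function.Injective f ∧ Function.Injective g ∧
    H = Set.range f ∧ N = Set.range g ∧ ∀ i j, (f i, g j) ∈ I ↔ i ≠ j

/-- O is a minimal object generator of the concept with extent A. -/
def IsMinObjGen (I : Set (G × M)) (A : Set G) (O : Set G) : Prop :=
  intDeriv I (extDerivFCA I O) = A ∧ ∀ P ⊂ O, intDeriv I (extDerivFCA I P) ≠ A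

/-- Q is a minimal attribute generator of the concept with intent B. -/
def IsMinAttGen (I : Set (G × M)) (B : Set M) (Q : Set M) : Prop :=
  extDerivFCA I (intDeriv I Q) = B ∧ ∀ P ⊂ Q, extDerivFCA I (intDeriv I P) ≠ B

/-- Union of all minimal object generators of the atoms of a Boolean suborder
given by an order embedding f of the powerset of Fin k. -/
def genH (I : Set (G × M)) {k : ℕ} (f : Set (Fin k) → Set G × Set M) : Set G :=
  {g | ∃ i : Fin k, ∃ O : Set G, IsMinObjGen I (f {i}).1 O ∧ g ∈ O}

/-- Union of all minimal attribute generators of the coatoms of a Boolean suborder. -/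
def genN (I : Set (G × M)) {k : ℕ} (f : Set (Fin k) → Set G × Set M) : Set M :=
  {m | ∃ i : Fin k, ∃ Q : Set M, IsMinAttGen I (f {i}ᶜ).2 Q ∧ m ∈ Q}

/-! Every concept of a closed-subcontext S is a concept of K, so the derivation operators of K
agree with those of S on concepts of S. Hence the join (resp. meet) in B(K) of two concepts of S
is the concept of S generated by the intersection of their intents (resp. extents), which is again
a concept of S. -/

section Subcontext

variable {α β : Type*} {H : Set α} {N : Set β} {J : Set (α × β)}

lemma subExtDeriv_anti {A A' : Set α} (h : A ⊆ A') :
    subExtDeriv N J A' ⊆ subExtDeriv N J A :=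
  fun _ hn => ⟨hn.1, fun g hg => hn.2 g (h hg)⟩

lemma subIntDeriv_anti {B B' : Set β} (h : B ⊆ B') :
    subIntDeriv H J B' ⊆ subIntDeriv H J B :=
  fun _ hg => ⟨hg.1, fun n hn => hg.2 n (h hn)⟩

lemma subset_subIntDeriv_subExtDeriv {A : Set α} (hA : A ⊆ H) :
    A ⊆ subIntDeriv H J (subExtDeriv N J A) :=
  fun g hg => ⟨hA hg, fun _ hn => hn.2 g hg⟩

lemma subset_subExtDeriv_subIntDeriv {B : Set β} (hB : B ⊆ N) :
    B ⊆ subExtDeriv N J (subIntDeriv H J B) :=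
  fun n hn => ⟨hB hn, fun _ hg => hg.2 n hn⟩

lemma isSubConcept_subIntDeriv_subExtDeriv {A : Set α} (hA : A ⊆ H) :
    IsSubConcept H N J (subIntDeriv H J (subExtDeriv N J A)) (subExtDeriv N J A) :=
  ⟨fun _ hg => hg.1, fun _ hn => hn.1,
    (subExtDeriv_anti (subset_subIntDeriv_subExtDeriv hA)).antisymm
      (subset_subExtDeriv_subIntDeriv fun _ hn => hn.1), rfl⟩

lemma IsSubConcept.subIntDeriv_inter {A C : Set α} {B D : Set β}
    (hc : IsSubConcept H N J A B) (hd : IsSubConcept H N J C D) :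
    IsSubConcept H N J (subIntDeriv H J (B ∩ D)) (B ∩ D) := by
  obtain ⟨-, hBN, hAB, hBA⟩ := hc
  obtain ⟨-, -, hCD, hDC⟩ := hd
  have hBD : B ∩ D ⊆ N := fun n hn => hBN hn.1
  have hA : A ⊆ subIntDeriv H J (B ∩ D) := hBA ▸ subIntDeriv_anti Set.inter_subset_left
  have hC : C ⊆ subIntDeriv H J (B ∩ D) := hDC ▸ subIntDeriv_anti Set.inter_subset_right
  refine ⟨fun _ hg => hg.1, hBD, ?_, rfl⟩
  exact Set.Subset.antisymm
    (fun n hn => ⟨hAB ▸ subExtDeriv_anti hA hn, hCD ▸ subExtDeriv_anti hC hn⟩)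
    (subset_subExtDeriv_subIntDeriv hBD)

lemma IsSubConcept.inter_subExtDeriv {A C : Set α} {B D : Set β}
    (hc : IsSubConcept H N J A B) (hd : IsSubConcept H N J C D) :
    IsSubConcept H N J (A ∩ C) (subExtDeriv N J (A ∩ C)) := by
  obtain ⟨hAH, -, hAB, hBA⟩ := hc
  obtain ⟨-, -, hCD, hDC⟩ := hd
  have hAC : A ∩ C ⊆ H := fun g hg => hAH hg.1
  have hB : B ⊆ subExtDeriv N J (A ∩ C) := hAB ▸ subExtDeriv_anti Set.inter_subset_left
  have hD : D ⊆ subExtDeriv N J (A ∩ C) := hCD ▸ subExtDeriv_anti Set.inter_subset_right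
  refine ⟨hAC, fun _ hn => hn.1, rfl, ?_⟩
  exact Set.Subset.antisymm
    (fun g hg => ⟨hBA ▸ subIntDeriv_anti hB hg, hDC ▸ subIntDeriv_anti hD hg⟩)
    (subset_subIntDeriv_subExtDeriv hAC)

end Subcontext

theorem stmt1 (I : Set (G × M)) (H : Set G) (N : Set M) (J : Set (G × M))
    (h : IsClosedSubcontext I H N J) :
    IsConceptSublattice I {c | IsSubConcept H N J c.1 c.2} := by
  refine ⟨⟨(_, _), isSubConcept_subIntDeriv_subExtDeriv (Set.empty_subset H)⟩,
    fun c hc => h.2 c.1 c.2 hc, fun c hc d hd => ⟨?_, ?_⟩⟩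
  · have hjoin := IsSubConcept.subIntDeriv_inter hc hd
    rw [Set.mem_ofPred_eq, conceptJoin, (h.2 _ _ hjoin).2]
    exact hjoin
  · have hmeet := IsSubConcept.inter_subExtDeriv hc hd
    rw [Set.mem_ofPred_eq, conceptMeet, (h.2 _ _ hmeet).1]
    exact hmeet
end

section
/- Let (A, B) ≤ (C, D) be two formal concepts of a finite formal context K = (G, M, I). Then (C, B, (A × B) ∪ (C × D)) is a closed-subcontext of K whose concept lattice is exactly {(A,B), (C,D)}. -/
variable {G M : Type*} [Fintype G] [Fintype M]

/-! In the context `(C, B, A × B ∪ C × D)` every object of `A` has all attributes `B`, while every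
object of `C \ A` has exactly the attributes `D ⊆ B`. Hence a set of objects derives to `B` or `D`
according as it lies in `A` or not, and dually a set of attributes derives to `C` or `A` according
as it lies in `D` or not; so the only concepts are `(A, B)` and `(C, D)`, which are concepts of `K`. -/

section
omit [Fintype G] [Fintype M]

variable {I : Set (G × M)} {A C E : Set G} {B D F : Set M}

theorem IsConcept.prod_subset (h : IsConcept I A B) : A ×ˢ B ⊆ I := by
  rintro ⟨g, m⟩ ⟨hg, hm⟩
  rw [← h.2] at hg
  exact hg m hm

theorem IsConcept.intent_subset_of_extent_subset (h1 : IsConcept I A B) (h2 : IsConcept I C D)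
    (hle : A ⊆ C) : D ⊆ B := by
  rw [← h1.1, ← h2.1]
  exact fun m hm g hg => hm g (hle hg)

theorem IsConcept.extent_eq_of_intent_eq (h1 : IsConcept I A B) (h2 : IsConcept I C D)
    (h : B = D) : A = C := by
  rw [← h1.2, ← h2.2, h]

theorem IsConcept.intent_eq_of_extent_eq (h1 : IsConcept I A B) (h2 : IsConcept I C D)
    (h : A = C) : B = D := by
  rw [← h1.1, ← h2.1, h]

theorem subExtDeriv_union_prod_of_subset (hE : E ⊆ A) :
    subExtDeriv B (A ×ˢ B ∪ C ×ˢ D) E = B :=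
  Set.sep_eq_self_iff_mem_true.2 fun _ hm _ hg => Or.inl ⟨hE hg, hm⟩

theorem subExtDeriv_union_prod_of_not_subset (hEC : E ⊆ C) (hDB : D ⊆ B) (hEA : ¬E ⊆ A) :
    subExtDeriv B (A ×ˢ B ∪ C ×ˢ D) E = D := by
  obtain ⟨g₀, hg₀E, hg₀A⟩ := Set.not_subset.1 hEA
  ext m
  refine ⟨fun ⟨_, hm⟩ => ?_, fun hm => ⟨hDB hm, fun g hg => Or.inr ⟨hEC hg, hm⟩⟩⟩
  rcases hm g₀ hg₀E with ⟨hg₀A', _⟩ | ⟨_, hmD⟩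
  exacts [absurd hg₀A' hg₀A, hmD]

theorem subIntDeriv_union_prod_of_subset (hF : F ⊆ D) :
    subIntDeriv C (A ×ˢ B ∪ C ×ˢ D) F = C :=
  Set.sep_eq_self_iff_mem_true.2 fun _ hg _ hm => Or.inr ⟨hg, hF hm⟩

theorem subIntDeriv_union_prod_of_not_subset (hFB : F ⊆ B) (hAC : A ⊆ C) (hFD : ¬F ⊆ D) :
    subIntDeriv C (A ×ˢ B ∪ C ×ˢ D) F = A := by
  obtain ⟨m₀, hm₀F, hm₀D⟩ := Set.not_subset.1 hFD
  ext g
  refine ⟨fun ⟨_, hg⟩ => ?_, fun hg => ⟨hAC hg, fun m hm => Or.inl ⟨hg, hFB hm⟩⟩⟩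
  rcases hg m₀ hm₀F with ⟨hgA, _⟩ | ⟨_, hm₀D'⟩
  exacts [hgA, absurd hm₀D' hm₀D]

variable (h1 : IsConcept I A B) (h2 : IsConcept I C D) (hle : A ⊆ C)
include h1 h2 hle

theorem subIntDeriv_union_prod_intent : subIntDeriv C (A ×ˢ B ∪ C ×ˢ D) B = A := by
  by_cases hBD : B ⊆ D
  · have hBD : B = D := hBD.antisymm (h1.intent_subset_of_extent_subset h2 hle)
    rw [subIntDeriv_union_prod_of_subset hBD.le, h1.extent_eq_of_intent_eq h2 hBD]
  · exact subIntDeriv_union_prod_of_not_subset subset_rfl hle hBD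

theorem subExtDeriv_union_prod_extent : subExtDeriv B (A ×ˢ B ∪ C ×ˢ D) C = D := by
  by_cases hCA : C ⊆ A
  · have hAC : A = C := hle.antisymm hCA
    rw [subExtDeriv_union_prod_of_subset hCA, h1.intent_eq_of_extent_eq h2 hAC]
  · exact subExtDeriv_union_prod_of_not_subset subset_rfl
      (h1.intent_subset_of_extent_subset h2 hle) hCA

theorem isSubConcept_union_prod_iff :
    IsSubConcept C B (A ×ˢ B ∪ C ×ˢ D) E F ↔ (E = A ∧ F = B) ∨ (E = C ∧ F = D) := by
  have hDB := h1.intent_subset_of_extent_subset h2 hle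
  constructor
  · rintro ⟨hEC, -, rfl, hFE⟩
    by_cases hEA : E ⊆ A
    · rw [subExtDeriv_union_prod_of_subset hEA] at hFE ⊢
      exact Or.inl ⟨hFE.symm.trans (subIntDeriv_union_prod_intent h1 h2 hle), rfl⟩
    · rw [subExtDeriv_union_prod_of_not_subset hEC hDB hEA] at hFE ⊢
      exact Or.inr ⟨hFE.symm.trans (subIntDeriv_union_prod_of_subset subset_rfl), rfl⟩
  · rintro (⟨rfl, rfl⟩ | ⟨rfl, rfl⟩)
    · exact ⟨hle, subset_rfl, subExtDeriv_union_prod_of_subset subset_rfl,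
        subIntDeriv_union_prod_intent h1 h2 hle⟩
    · exact ⟨subset_rfl, hDB, subExtDeriv_union_prod_extent h1 h2 hle,
        subIntDeriv_union_prod_of_subset subset_rfl⟩

theorem union_prod_subset_inter_prod : A ×ˢ B ∪ C ×ˢ D ⊆ I ∩ C ×ˢ B :=
  Set.union_subset
    (Set.subset_inter h1.prod_subset (Set.prod_mono hle subset_rfl))
    (Set.subset_inter h2.prod_subset
      (Set.prod_mono subset_rfl (h1.intent_subset_of_extent_subset h2 hle)))

end

theorem stmt7 (I : Set (G × M)) (A C : Set G) (B D : Set M)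
    (h1 : IsConcept I A B) (h2 : IsConcept I C D) (hle : A ⊆ C) :
    IsClosedSubcontext I C B (A ×ˢ B ∪ C ×ˢ D) ∧
      ∀ E F, IsSubConcept C B (A ×ˢ B ∪ C ×ˢ D) E F ↔ (E = A ∧ F = B) ∨ (E = C ∧ F = D) := by
  have hsub E F := isSubConcept_union_prod_iff (E := E) (F := F) h1 h2 hle
  refine ⟨⟨union_prod_subset_inter_prod h1 h2 hle, fun E F hEF => ?_⟩, hsub⟩
  rcases (hsub E F).1 hEF with ⟨rfl, rfl⟩ | ⟨rfl, rfl⟩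
  exacts [h1, h2]
end
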